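/- Let d ∈ ℕ and θ ∈ ℝ. Let H = (1/√2)·!![1,1;1,-1], Rz(θ) = !![exp(-iθ/2),0;0,exp(iθ/2)], Z = !![1,0;0,-1], and E₀₀ = !![1,0;0,0] (the density matrix |0⟩⟨0|), all as 2×2 complex matrices. Set U = H · (Rz(θ))^d · H. Then the trace of Z · U · E₀₀ · U† equals cos(dθ), where † denotes the conjugate transpose. -/
import Mathlib

open Matrix

noncomputable def Hgate : Matrix (Fin 2) (Fin 2) ℂ :=
  ((Real.sqrt 2 : ℂ))⁻¹ • !![1, 1; 1, -1]

def PauliZ : Matrix (Fin 2) (Fin 2) ℂ := !![1, 0; 0, -1]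

noncomputable def Rz (θ : ℝ) : Matrix (Fin 2) (Fin 2) ℂ :=
  !![Complex.exp (-(Complex.I * θ) / 2), 0; 0, Complex.exp (Complex.I * θ / 2)]

def E00 : Matrix (Fin 2) (Fin 2) ℂ := !![1, 0; 0, 0]

lemma Rz_pow (d : ℕ) (θ : ℝ) :
    (Rz θ) ^ d = !![Complex.exp (-(Complex.I * (d*θ)) / 2), 0; 0,
      Complex.exp (Complex.I * (d*θ) / 2)] := by
  induction d with
  | zero => simp [Matrix.one_fin_two]
  | succ n ih =>
    rw [pow_succ, ih, Rz]
    rw [Matrix.mul_fin_two]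
    push_cast
    rw [← Complex.exp_add, ← Complex.exp_add]
    ring_nf

lemma hs2 : ((Real.sqrt 2 : ℂ))⁻¹ * ((Real.sqrt 2 : ℂ))⁻¹ = 2⁻¹ := by
  rw [← mul_inv, ← Complex.ofReal_mul, Real.mul_self_sqrt (by norm_num)]
  norm_num

lemma HDH (a b : ℂ) :
    Hgate * !![a, 0; 0, b] * Hgate = (2:ℂ)⁻¹ • !![a+b, a-b; a-b, a+b] := by
  rw [Hgate, Matrix.smul_mul, Matrix.mul_smul, Matrix.smul_mul, smul_smul, hs2]
  congr 1
  rw [Matrix.mul_fin_two, Matrix.mul_fin_two]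
  congr 1 <;> ring

theorem stmt12 (d : ℕ) (θ : ℝ) :
    (PauliZ * (Hgate * (Rz θ) ^ d * Hgate) * E00 *
        (Hgate * (Rz θ) ^ d * Hgate)ᴴ).trace =
      ((Real.cos (d * θ) : ℝ) : ℂ) := by
  rw [Rz_pow, HDH]
  set a : ℂ := Complex.exp (-(Complex.I * (d*θ)) / 2) with ha
  set b : ℂ := Complex.exp (Complex.I * (d*θ) / 2) with hb
  have hca : (starRingEnd ℂ) a = b := by
    rw [ha, hb, ← Complex.exp_conj]
    congr 1
    simp [Complex.conj_ofReal, map_ofNat]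
  have hcb : (starRingEnd ℂ) b = a := by
    rw [ha, hb, ← Complex.exp_conj]
    congr 1
    simp [Complex.conj_ofReal, map_ofNat]
  have hab : a * b = 1 := by
    rw [ha, hb, ← Complex.exp_add]
    ring_nf
    exact Complex.exp_zero
  have hcos : ((Real.cos (d * θ) : ℝ) : ℂ) = (a * a + b * b) / 2 := by
    rw [Complex.ofReal_cos, Complex.cos, ha, hb, ← Complex.exp_add, ← Complex.exp_add]
    push_cast
    ring_nf
  rw [hcos]
  have hT : (!![a + b, a - b; a - b, a + b])ᴴ = !![b + a, b - a; b - a, b + a] := by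
    ext i j
    fin_cases i <;> fin_cases j <;>
      simp [Matrix.conjTranspose_apply, hca, hcb]
  have hst : star ((2:ℂ)⁻¹) = 2⁻¹ := by simp
  rw [Matrix.conjTranspose_smul, hT, hst, PauliZ, E00]
  simp only [Matrix.mul_smul, Matrix.smul_mul, smul_smul, Matrix.trace_smul, smul_eq_mul,
    Matrix.mul_fin_two, Matrix.trace_fin_two, Matrix.cons_val_zero, Matrix.cons_val_one,
    Matrix.head_cons, Matrix.head_fin_const, Matrix.cons_val', Matrix.empty_val',
    Matrix.cons_val_fin_one]
  simp
  ring
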